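/- arXiv:2106.15173 — 2 statements merged into one kernel-verified Lean document; each statement's English description precedes it below -/
import Mathlib

section
/- There is an absolute constant c such that for every a, b ∈ R^n, every p ≥ 1, every I ⊂ {1,...,n}, and the partition I = ∪_ℓ I_ℓ where I_1 consists of the indices of the p largest values of (|a_i|)_{i∈I}, I_2 the next p largest, and so on, one has (E | Σ_{i∈I} ε_i a_i b_i |^p)^{1/p} ≤ c ‖a‖_2 · max_ℓ ‖proj_{I_ℓ} b‖_2, where ε_1,...,ε_n are independent Rademacher signs. -/
/-!
Split `I` into its first block `J 0` and the rest. On `J 0` the sum is bounded for every sign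
pattern by Cauchy–Schwarz: `|∑_{J 0} εᵢ aᵢ bᵢ| ≤ ‖a‖₂ ‖proj_{J 0} b‖₂`. On the rest, Khintchine's
inequality, obtained from the sub-Gaussian bound `E exp (λ ∑ εᵢ xᵢ) ≤ exp (λ² ‖x‖₂² / 2)`, gives
`4 √p (∑ aᵢ² bᵢ²)^{1/2}`. The greedy ordering absorbs the `√p`: for `i ∈ J (ℓ + 1)` the value `|aᵢ|`
is at most each of the `p` values `|aⱼ|`, `j ∈ J ℓ`, so `p aᵢ² ≤ ‖proj_{J ℓ} a‖₂²`, and summing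
over blocks `p ∑_{i ∉ J 0} aᵢ² bᵢ² ≤ ‖a‖₂² maxₗ ‖proj_{J ℓ} b‖₂²`. Minkowski's inequality
combines the two parts, with `c = 5`.
-/

/-- `J` is the greedy partition of `I` into blocks of (at most) `p` indices, ordered by
decreasing values of `|a i|`: `J 0` holds the indices of the `p` largest `|a i|`, `i ∈ I`,
`J 1` the next `p` largest, and so on. -/
def IsGreedyPartition {n : ℕ} (a : Fin n → ℝ) (I : Finset (Fin n)) (p : ℕ)
    (J : ℕ → Finset (Fin n)) : Prop :=
  (∀ ℓ, J ℓ ⊆ I) ∧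
  (∀ ℓ ℓ', ℓ ≠ ℓ' → Disjoint (J ℓ) (J ℓ')) ∧
  (∀ i ∈ I, ∃ ℓ, i ∈ J ℓ) ∧
  (∀ ℓ, (J ℓ).card ≤ p) ∧
  (∀ ℓ, (J (ℓ + 1)).Nonempty → (J ℓ).card = p) ∧
  (∀ ℓ, ∀ i ∈ J (ℓ + 1), ∀ j ∈ J ℓ, |a i| ≤ |a j|)

open Finset Real

def rademacherSign (b : Bool) : ℝ := if b then 1 else -1

def rademacherSum {ι : Type*} (ε : ι → Bool) (T : Finset ι) (x : ι → ℝ) : ℝ :=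
  ∑ i ∈ T, rademacherSign (ε i) * x i

noncomputable def uniformLpNorm {Ω : Type*} [Fintype Ω] (p : ℝ) (f : Ω → ℝ) : ℝ :=
  ((∑ ω, |f ω| ^ p) / Fintype.card Ω) ^ p⁻¹

section uniformLpNorm

variable {Ω : Type*} [Fintype Ω] {p C : ℝ} {f : Ω → ℝ}

lemma uniformLpNorm_le_of_sum_rpow_le (hp : 0 < p) (hC : 0 ≤ C)
    (h : (∑ ω, |f ω| ^ p) / Fintype.card Ω ≤ C ^ p) : uniformLpNorm p f ≤ C := by
  have hsum : 0 ≤ (∑ ω, |f ω| ^ p) / Fintype.card Ω := by positivity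
  calc uniformLpNorm p f ≤ (C ^ p) ^ p⁻¹ := rpow_le_rpow hsum h (inv_nonneg.2 hp.le)
    _ = C := rpow_rpow_inv hC hp.ne'

lemma uniformLpNorm_le_of_abs_le [Nonempty Ω] (hp : 0 < p) (hC : 0 ≤ C) (h : ∀ ω, |f ω| ≤ C) :
    uniformLpNorm p f ≤ C := by
  refine uniformLpNorm_le_of_sum_rpow_le hp hC ?_
  rw [div_le_iff₀ (by positivity)]
  calc ∑ ω, |f ω| ^ p ≤ ∑ _ω : Ω, C ^ p :=
        sum_le_sum fun ω _ => rpow_le_rpow (abs_nonneg _) (h ω) hp.le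
    _ = C ^ p * Fintype.card Ω := by simp [mul_comm]

lemma uniformLpNorm_add_le (hp : 1 ≤ p) (f g : Ω → ℝ) :
    uniformLpNorm p (fun ω => f ω + g ω) ≤ uniformLpNorm p f + uniformLpNorm p g := by
  have hp0 : 0 ≤ p⁻¹ := inv_nonneg.2 (zero_le_one.trans hp)
  have hnonneg : ∀ h : Ω → ℝ, 0 ≤ ∑ ω, |h ω| ^ p := fun h =>
    sum_nonneg fun ω _ => rpow_nonneg (abs_nonneg _) _
  simp only [uniformLpNorm, div_rpow (hnonneg _) (Nat.cast_nonneg _)]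
  rw [← add_div]
  gcongr
  simpa only [one_div] using Lp_add_le univ f g hp

lemma uniformLpNorm_pi_bool {ι : Type*} [Fintype ι] [DecidableEq ι] (f : (ι → Bool) → ℝ) :
    uniformLpNorm p f = ((∑ ε, |f ε| ^ p) / 2 ^ Fintype.card ι) ^ p⁻¹ := by
  simp only [uniformLpNorm, Fintype.card_fun, Fintype.card_bool, Nat.cast_pow, Nat.cast_ofNat]

end uniformLpNorm

lemma abs_pow_le_mul_exp_add_exp {l : ℝ} (hl : 0 < l) (t : ℝ) (p : ℕ) :
    |t| ^ p ≤ (p / l) ^ p * (exp (l * t) + exp (-(l * t))) := by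
  have hpow : (l * |t|) ^ p ≤ (p : ℝ) ^ p * exp (l * |t|) := by
    have h := pow_div_factorial_le_exp _ (mul_nonneg hl.le (abs_nonneg t)) p
    rw [div_le_iff₀ (by positivity)] at h
    calc (l * |t|) ^ p ≤ exp (l * |t|) * p.factorial := h
      _ ≤ exp (l * |t|) * (p : ℝ) ^ p := by gcongr; exact_mod_cast p.factorial_le_pow
      _ = (p : ℝ) ^ p * exp (l * |t|) := mul_comm _ _
  have hexp : exp (l * |t|) ≤ exp (l * t) + exp (-(l * t)) := by
    rcases abs_cases t with ⟨h, _⟩ | ⟨h, _⟩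
    · rw [h]; linarith [exp_pos (-(l * t))]
    · rw [h, mul_neg]; linarith [exp_pos (l * t)]
  rw [div_pow, div_mul_eq_mul_div, le_div_iff₀ (by positivity), ← mul_pow, mul_comm |t|]
  exact hpow.trans (by gcongr)

lemma two_mul_exp_half_le_four_pow {p : ℕ} (hp : 1 ≤ p) : 2 * exp (p / 2) ≤ 4 ^ p := by
  have hhalf : exp (1 / 2) ≤ 2 := by
    have hsq : exp (1 / 2) ^ 2 = exp 1 := by rw [← exp_nat_mul]; norm_num
    nlinarith [exp_one_lt_d9, exp_pos (1 / 2)]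
  calc 2 * exp (p / 2) = 2 * exp (1 / 2) ^ p := by rw [← exp_nat_mul]; ring_nf
    _ ≤ 2 ^ p * 2 ^ p := by gcongr; exact le_self_pow₀ one_le_two (by omega)
    _ = 4 ^ p := by rw [← mul_pow]; norm_num

section rademacherSum

variable {ι : Type*}

lemma abs_rademacherSum_le (ε : ι → Bool) (T : Finset ι) (x : ι → ℝ) :
    |rademacherSum ε T x| ≤ ∑ i ∈ T, |x i| := by
  refine (abs_sum_le_sum_abs _ _).trans_eq (sum_congr rfl fun i _ => ?_)
  cases ε i <;> simp [rademacherSign]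

lemma abs_rademacherSum_mul_le (ε : ι → Bool) (T : Finset ι) (x y : ι → ℝ) :
    |rademacherSum ε T (fun i => x i * y i)| ≤ √(∑ i ∈ T, x i ^ 2) * √(∑ i ∈ T, y i ^ 2) := by
  calc |rademacherSum ε T (fun i => x i * y i)| ≤ ∑ i ∈ T, |x i| * |y i| := by
        simpa only [abs_mul] using abs_rademacherSum_le ε T fun i => x i * y i
    _ ≤ √(∑ i ∈ T, |x i| ^ 2) * √(∑ i ∈ T, |y i| ^ 2) := sum_mul_le_sqrt_mul_sqrt _ _ _
    _ = √(∑ i ∈ T, x i ^ 2) * √(∑ i ∈ T, y i ^ 2) := by simp only [sq_abs]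

variable [Fintype ι] [DecidableEq ι]

lemma sum_exp_mul_rademacherSum_le (T : Finset ι) (x : ι → ℝ) (l : ℝ) :
    ∑ ε : ι → Bool, exp (l * rademacherSum ε T x)
      ≤ 2 ^ Fintype.card ι * exp (l ^ 2 * (∑ i ∈ T, x i ^ 2) / 2) := by
  set g : ι → Bool → ℝ := fun i c => if i ∈ T then exp (l * (rademacherSign c * x i)) else 1
  have hfactor : ∀ i, ∑ c, g i c ≤ 2 * if i ∈ T then exp ((l * x i) ^ 2 / 2) else 1 := by
    intro i
    by_cases hi : i ∈ T
    · have h := cosh_le_exp_half_sq (l * x i)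
      simp only [g, hi, if_true, Fintype.sum_bool, rademacherSign, cosh_eq, Bool.false_eq_true,
        if_false, one_mul, neg_one_mul, mul_neg] at h ⊢
      linarith
    · simp [g, hi]
  calc ∑ ε : ι → Bool, exp (l * rademacherSum ε T x)
      = ∑ ε : ι → Bool, ∏ i, g i (ε i) := by
        refine sum_congr rfl fun ε _ => ?_
        simp only [g, rademacherSum, mul_sum, exp_sum, prod_ite_mem, univ_inter]
    _ = ∏ i, ∑ c, g i c := (Fintype.prod_sum g).symm
    _ ≤ ∏ i, 2 * if i ∈ T then exp ((l * x i) ^ 2 / 2) else 1 :=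
        prod_le_prod (fun i _ => sum_nonneg fun c _ => by positivity) fun i _ => hfactor i
    _ = 2 ^ Fintype.card ι * exp (l ^ 2 * (∑ i ∈ T, x i ^ 2) / 2) := by
        rw [prod_mul_distrib, prod_const, prod_ite_mem, univ_inter, ← exp_sum, card_univ]
        congr 2
        rw [mul_sum, sum_div]
        exact sum_congr rfl fun i _ => by ring

lemma sum_abs_rademacherSum_pow_le (T : Finset ι) (x : ι → ℝ) {l : ℝ} (hl : 0 < l) (p : ℕ) :
    ∑ ε : ι → Bool, |rademacherSum ε T x| ^ p
      ≤ 2 * 2 ^ Fintype.card ι * (p / l) ^ p * exp (l ^ 2 * (∑ i ∈ T, x i ^ 2) / 2) := by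
  have hneg : ∀ ε : ι → Bool, -(l * rademacherSum ε T x) = -l * rademacherSum ε T x :=
    fun ε => (neg_mul _ _).symm
  calc ∑ ε : ι → Bool, |rademacherSum ε T x| ^ p
      ≤ ∑ ε : ι → Bool, (p / l) ^ p
          * (exp (l * rademacherSum ε T x) + exp (-l * rademacherSum ε T x)) :=
        sum_le_sum fun ε _ => by rw [← hneg]; exact abs_pow_le_mul_exp_add_exp hl _ p
    _ = (p / l) ^ p * (∑ ε : ι → Bool, exp (l * rademacherSum ε T x)
          + ∑ ε : ι → Bool, exp (-l * rademacherSum ε T x)) := by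
        rw [← mul_sum, sum_add_distrib]
    _ ≤ (p / l) ^ p * (2 ^ Fintype.card ι * exp (l ^ 2 * (∑ i ∈ T, x i ^ 2) / 2)
          + 2 ^ Fintype.card ι * exp ((-l) ^ 2 * (∑ i ∈ T, x i ^ 2) / 2)) := by
        gcongr <;> exact sum_exp_mul_rademacherSum_le T x _
    _ = 2 * 2 ^ Fintype.card ι * (p / l) ^ p * exp (l ^ 2 * (∑ i ∈ T, x i ^ 2) / 2) := by
        rw [neg_sq]; ring

lemma sum_abs_rademacherSum_pow_le_of_sum_sq_eq (T : Finset ι) (x : ι → ℝ) {p : ℕ} (hp : 1 ≤ p)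
    {σ : ℝ} (hσ : 0 < σ) (hsq : ∑ i ∈ T, x i ^ 2 = σ ^ 2) :
    ∑ ε : ι → Bool, |rademacherSum ε T x| ^ p ≤ (4 * √p * σ) ^ p * 2 ^ Fintype.card ι := by
  have hp0 : (0 : ℝ) < p := by exact_mod_cast hp
  -- the near-optimal Chernoff parameter
  set l := √p / σ
  have hl : 0 < l := by positivity
  have hpl : p / l = √p * σ := by
    rw [div_div_eq_mul_div, div_eq_iff (sqrt_pos.2 hp0).ne', mul_right_comm,
      mul_self_sqrt hp0.le]
  have hl2 : l ^ 2 * (∑ i ∈ T, x i ^ 2) = p := by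
    rw [hsq, div_pow, sq_sqrt hp0.le]; field_simp
  calc ∑ ε : ι → Bool, |rademacherSum ε T x| ^ p
      ≤ 2 * 2 ^ Fintype.card ι * (p / l) ^ p * exp (l ^ 2 * (∑ i ∈ T, x i ^ 2) / 2) :=
        sum_abs_rademacherSum_pow_le T x hl p
    _ = (2 * exp (p / 2)) * (√p * σ) ^ p * 2 ^ Fintype.card ι := by rw [hpl, hl2]; ring
    _ ≤ 4 ^ p * (√p * σ) ^ p * 2 ^ Fintype.card ι := by
        gcongr; exact two_mul_exp_half_le_four_pow hp
    _ = (4 * √p * σ) ^ p * 2 ^ Fintype.card ι := by ring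

lemma uniformLpNorm_rademacherSum_le (T : Finset ι) (x : ι → ℝ) {p : ℕ} (hp : 1 ≤ p) :
    uniformLpNorm p (fun ε : ι → Bool => rademacherSum ε T x)
      ≤ 4 * √p * √(∑ i ∈ T, x i ^ 2) := by
  refine uniformLpNorm_le_of_sum_rpow_le (by positivity) (by positivity) ?_
  simp only [rpow_natCast, Fintype.card_fun, Fintype.card_bool, Nat.cast_pow, Nat.cast_ofNat]
  rw [div_le_iff₀ (by positivity)]
  have hsq : ∑ i ∈ T, x i ^ 2 = √(∑ i ∈ T, x i ^ 2) ^ 2 :=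
    (sq_sqrt (sum_nonneg fun i _ => sq_nonneg (x i))).symm
  rcases (sqrt_nonneg (∑ i ∈ T, x i ^ 2)).eq_or_lt with hσ0 | hσ0
  · rw [← hσ0, zero_pow two_ne_zero, sum_eq_zero_iff_of_nonneg fun j _ => sq_nonneg (x j)] at hsq
    have hS : ∀ ε : ι → Bool, rademacherSum ε T x = 0 := fun ε =>
      sum_eq_zero fun i hi => by rw [pow_eq_zero_iff two_ne_zero |>.1 (hsq i hi), mul_zero]
    simp only [hS, abs_zero, zero_pow (by omega : p ≠ 0), sum_const_zero]
    positivity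
  · exact sum_abs_rademacherSum_pow_le_of_sum_sq_eq T x hp hσ0 hsq

lemma uniformLpNorm_rademacherSum_mul_le {p : ℝ} (hp : 0 < p) (T : Finset ι) (x y : ι → ℝ) :
    uniformLpNorm p (fun ε : ι → Bool => rademacherSum ε T (fun i => x i * y i))
      ≤ √(∑ i ∈ T, x i ^ 2) * √(∑ i ∈ T, y i ^ 2) :=
  uniformLpNorm_le_of_abs_le hp (by positivity) fun ε => abs_rademacherSum_mul_le ε T x y

end rademacherSum

namespace IsGreedyPartition

variable {n p : ℕ} {a : Fin n → ℝ} {I : Finset (Fin n)} {J : ℕ → Finset (Fin n)}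

lemma nonempty_of_le (hJ : IsGreedyPartition a I p J) {k ℓ : ℕ} (hkℓ : k ≤ ℓ)
    (hℓ : (J ℓ).Nonempty) : (J k).Nonempty := by
  obtain ⟨-, -, -, hcard, hfull, -⟩ := hJ
  induction ℓ, hkℓ using Nat.le_induction with
  | base => exact hℓ
  | succ m _ ih =>
    refine ih ?_
    rw [← card_pos, hfull m hℓ]
    exact (card_pos.2 hℓ).trans_le (hcard (m + 1))

lemma lt_card_of_nonempty (hJ : IsGreedyPartition a I p J) {ℓ : ℕ} (hℓ : (J ℓ).Nonempty) :
    ℓ < I.card := by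
  have hprev : ∀ k ≤ ℓ, (J k).Nonempty := fun k hk => hJ.nonempty_of_le hk hℓ
  obtain ⟨hsub, hdisj, -⟩ := hJ
  calc ℓ < ∑ _k ∈ range (ℓ + 1), 1 := by simp
    _ ≤ ∑ k ∈ range (ℓ + 1), (J k).card := sum_le_sum fun k hk =>
        card_pos.2 (hprev k (Nat.lt_succ_iff.1 (mem_range.1 hk)))
    _ = ((range (ℓ + 1)).biUnion J).card := (card_biUnion fun k _ k' _ h => hdisj k k' h).symm
    _ ≤ I.card := card_le_card (biUnion_subset.2 fun k _ => hsub k)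

lemma sdiff_subset_biUnion (hJ : IsGreedyPartition a I p J) :
    I \ J 0 ⊆ (range I.card).biUnion fun ℓ => J (ℓ + 1) := by
  intro i hi
  obtain ⟨hiI, hi0⟩ := mem_sdiff.1 hi
  have hcover : ∀ i ∈ I, ∃ ℓ, i ∈ J ℓ := hJ.2.2.1
  obtain ⟨_ | ℓ, hiℓ⟩ := hcover i hiI
  · exact absurd hiℓ hi0
  · exact mem_biUnion.2 ⟨ℓ, mem_range.2 ((Nat.lt_succ_self ℓ).trans
      (hJ.lt_card_of_nonempty ⟨i, hiℓ⟩)), hiℓ⟩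

lemma mul_sq_le_sum_sq (hJ : IsGreedyPartition a I p J) {ℓ : ℕ} {i : Fin n}
    (hi : i ∈ J (ℓ + 1)) : p * a i ^ 2 ≤ ∑ j ∈ J ℓ, a j ^ 2 := by
  obtain ⟨-, -, -, -, hfull, hanti⟩ := hJ
  have h := card_nsmul_le_sum (J ℓ) (fun j => a j ^ 2) (a i ^ 2) fun j hj =>
    sq_le_sq.2 (hanti ℓ i hi j hj)
  rwa [hfull ℓ ⟨i, hi⟩, nsmul_eq_mul] at h

lemma mul_sum_sdiff_sq_le (hJ : IsGreedyPartition a I p J) {b : Fin n → ℝ} {M : ℝ}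
    (hM : ∀ ℓ, ∑ i ∈ J ℓ, b i ^ 2 ≤ M) :
    p * ∑ i ∈ I \ J 0, (a i * b i) ^ 2 ≤ (∑ i, a i ^ 2) * M := by
  have hM0 : 0 ≤ M := (sum_nonneg fun i _ => sq_nonneg (b i)).trans (hM 0)
  have hdisj : ∀ ℓ ℓ', ℓ ≠ ℓ' → Disjoint (J ℓ) (J ℓ') := hJ.2.1
  calc (p : ℝ) * ∑ i ∈ I \ J 0, (a i * b i) ^ 2
      ≤ p * ∑ i ∈ (range I.card).biUnion (fun ℓ => J (ℓ + 1)), (a i * b i) ^ 2 := by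
        gcongr
        exact hJ.sdiff_subset_biUnion
    _ = ∑ ℓ ∈ range I.card, ∑ i ∈ J (ℓ + 1), (p : ℝ) * a i ^ 2 * b i ^ 2 := by
        rw [sum_biUnion fun k _ k' _ h => hdisj (k + 1) (k' + 1) (by omega), mul_sum]
        exact sum_congr rfl fun ℓ _ => by rw [mul_sum]; exact sum_congr rfl fun i _ => by ring
    _ ≤ ∑ ℓ ∈ range I.card, ∑ i ∈ J (ℓ + 1), (∑ j ∈ J ℓ, a j ^ 2) * b i ^ 2 := by
        gcongr with ℓ _ i hi
        exact hJ.mul_sq_le_sum_sq hi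
    _ ≤ ∑ ℓ ∈ range I.card, (∑ j ∈ J ℓ, a j ^ 2) * M := by
        gcongr with ℓ _
        rw [← mul_sum]
        exact mul_le_mul_of_nonneg_left (hM _) (sum_nonneg fun j _ => sq_nonneg _)
    _ = (∑ i ∈ (range I.card).biUnion J, a i ^ 2) * M := by
        rw [sum_biUnion fun k _ k' _ h => hdisj k k' h, sum_mul]
    _ ≤ (∑ i, a i ^ 2) * M := by
        gcongr
        exact subset_univ _

end IsGreedyPartition

/-- **Moment bound for Rademacher sums (Lemma 2.?).** There is an absolute constant `c` such
that for all `a, b ∈ ℝⁿ`, `p ≥ 1`, `I ⊆ {1,…,n}` and the greedy partition `I = ⋃ₗ Iₗ` by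
decreasing `|a i|` into blocks of size `p`,
`(E |Σ_{i∈I} ε_i a_i b_i|^p)^{1/p} ≤ c ‖a‖₂ maxₗ ‖proj_{Iₗ} b‖₂`,
the expectation being over independent Rademacher signs `ε`. -/
theorem bernoulli_process_moment_bound :
    ∃ c : ℝ, 0 < c ∧
      ∀ (n : ℕ) (a b : Fin n → ℝ) (I : Finset (Fin n)) (p : ℕ), 1 ≤ p →
        ∀ J : ℕ → Finset (Fin n), IsGreedyPartition a I p J →
          ((∑ ε : Fin n → Bool,
              |∑ i ∈ I, (if ε i then (1:ℝ) else -1) * a i * b i| ^ (p : ℝ)) / 2 ^ n)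
              ^ (p : ℝ)⁻¹
            ≤ c * Real.sqrt (∑ i : Fin n, a i ^ 2) *
                ⨆ ℓ : ℕ, Real.sqrt (∑ i ∈ J ℓ, b i ^ 2) := by
  refine ⟨5, by norm_num, fun n a b I p hp J hJ => ?_⟩
  set A := √(∑ i, a i ^ 2)
  set M := ⨆ ℓ, √(∑ i ∈ J ℓ, b i ^ 2)
  have hM : ∀ ℓ, √(∑ i ∈ J ℓ, b i ^ 2) ≤ M := le_ciSup ⟨√(∑ i, b i ^ 2), by
    rintro _ ⟨ℓ, rfl⟩
    exact sqrt_le_sqrt (sum_le_sum_of_subset_of_nonneg (subset_univ _) fun i _ _ => sq_nonneg _)⟩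
  have hM0 : 0 ≤ M := (sqrt_nonneg _).trans (hM 0)
  have hhead : uniformLpNorm p (fun ε => rademacherSum ε (J 0) (fun i => a i * b i)) ≤ A * M :=
    (uniformLpNorm_rademacherSum_mul_le (by positivity) _ a b).trans <| mul_le_mul
      (sqrt_le_sqrt (sum_le_sum_of_subset_of_nonneg (subset_univ _) fun i _ _ => sq_nonneg _))
      (hM 0) (sqrt_nonneg _) (sqrt_nonneg _)
  have htail :
      uniformLpNorm p (fun ε => rademacherSum ε (I \ J 0) (fun i => a i * b i)) ≤ 4 * (A * M) := by
    refine (uniformLpNorm_rademacherSum_le _ _ hp).trans ?_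
    rw [mul_assoc, ← sqrt_mul (Nat.cast_nonneg _), ← sqrt_sq hM0, ← sqrt_mul (by positivity)]
    refine mul_le_mul_of_nonneg_left (sqrt_le_sqrt ?_) (by norm_num)
    exact hJ.mul_sum_sdiff_sq_le fun ℓ => (sqrt_le_left hM0).1 (hM ℓ)
  have hsplit : ∀ ε : Fin n → Bool, ∑ i ∈ I, (if ε i then (1:ℝ) else -1) * a i * b i
      = rademacherSum ε (J 0) (fun i => a i * b i)
        + rademacherSum ε (I \ J 0) (fun i => a i * b i) := by
    intro ε
    simp only [rademacherSum, rademacherSign, mul_assoc]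
    rw [add_comm, sum_sdiff (hJ.1 0)]
  calc _ = uniformLpNorm p (fun ε => rademacherSum ε (J 0) (fun i => a i * b i)
            + rademacherSum ε (I \ J 0) (fun i => a i * b i)) := by
        rw [uniformLpNorm_pi_bool, Fintype.card_fin]
        simp only [hsplit]
    _ ≤ A * M + 4 * (A * M) := (uniformLpNorm_add_le (by exact_mod_cast hp) _ _).trans
        (add_le_add hhead htail)
    _ = 5 * A * M := by ring
end

section
/- With the blocks I_ℓ as above (greedy partition of I by decreasing |a_i| into blocks of size at most p), Σ_{i ∈ I∖I_1} a_i^2 b_i^2 ≤ ‖a‖_2^2 · max_{ℓ≥1} ‖proj_{I_{ℓ+1}} b‖_2^2 / p for all a, b ∈ R^n. -/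
open scoped BigOperators

/-- With the greedy partition of `I` by decreasing `|a i|` into blocks of size `p`
(`J 0` the first block),
`Σ_{i ∈ I∖I₁} a_i² b_i² ≤ ‖a‖₂² maxₗ ‖proj_{I_{ℓ+1}} b‖₂² / p`. -/
theorem greedy_partition_tail_bound {n : ℕ} (a b : Fin n → ℝ) (I : Finset (Fin n))
    (p : ℕ) (hp : 1 ≤ p) (J : ℕ → Finset (Fin n)) (hJ : IsGreedyPartition a I p J) :
    ∑ i ∈ I \ J 0, a i ^ 2 * b i ^ 2
      ≤ (∑ i : Fin n, a i ^ 2) * (⨆ ℓ : ℕ, ∑ i ∈ J (ℓ + 1), b i ^ 2) / p := by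
  obtain ⟨hsub, hdisj, hcover, hcard, hfull, hord⟩ := hJ
  have hp' : (0:ℝ) < p := by exact_mod_cast Nat.lt_of_lt_of_le Nat.zero_lt_one hp
  set S := ⨆ ℓ : ℕ, ∑ i ∈ J (ℓ + 1), b i ^ 2 with hSdef
  have hbdd : BddAbove (Set.range fun ℓ : ℕ => ∑ i ∈ J (ℓ + 1), b i ^ 2) := by
    refine ⟨∑ i : Fin n, b i ^ 2, ?_⟩
    rintro x ⟨ℓ, rfl⟩
    exact Finset.sum_le_sum_of_subset_of_nonneg (Finset.subset_univ _)
      (fun i _ _ => sq_nonneg _)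
  have hSle : ∀ ℓ, ∑ i ∈ J (ℓ + 1), b i ^ 2 ≤ S := fun ℓ => le_ciSup hbdd ℓ
  have hS0 : 0 ≤ S :=
    le_trans (Finset.sum_nonneg fun i _ => sq_nonneg _) (hSle 0)
  -- nonemptiness is downward closed
  have hmono : ∀ ℓ k, k ≤ ℓ → (J ℓ).Nonempty → (J k).Nonempty := by
    intro ℓ
    induction ℓ with
    | zero => intro k hk hne; exact Nat.le_zero.mp hk ▸ hne
    | succ m ih =>
        intro k hk hne
        rcases Nat.lt_succ_iff_lt_or_eq.mp (Nat.lt_succ_of_le hk) with h | h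
        · have hm : (J m).Nonempty := by
            have := hfull m hne
            exact Finset.card_pos.mp (by omega)
          exact ih k (Nat.lt_succ_iff.mp h) hm
        · exact h ▸ hne
  -- blocks beyond I.card are empty
  set N := I.card with hN
  have hemp : ∀ ℓ, N < ℓ → J ℓ = ∅ := by
    intro ℓ hℓ
    by_contra h
    have hne : (J ℓ).Nonempty := Finset.nonempty_iff_ne_empty.mpr h
    have hcards : ∀ k ∈ Finset.range ℓ, (J k).card = p := by
      intro k hk
      have hk' : k + 1 ≤ ℓ := Finset.mem_range.mp hk
      exact hfull k (hmono ℓ (k + 1) hk' hne)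
    have hU : (Finset.range ℓ).biUnion J ⊆ I := by
      intro i hi
      obtain ⟨k, _, hik⟩ := Finset.mem_biUnion.mp hi
      exact hsub k hik
    have hcardU : ((Finset.range ℓ).biUnion J).card = ℓ * p := by
      rw [Finset.card_biUnion (fun x _ y _ hxy => hdisj x y hxy)]
      rw [Finset.sum_congr rfl hcards]
      simp [Finset.sum_const, Finset.card_range]
    have := Finset.card_le_card hU
    rw [hcardU] at this
    have : ℓ ≤ N := by
      rw [hN]
      calc ℓ = ℓ * 1 := (Nat.mul_one ℓ).symm
        _ ≤ ℓ * p := Nat.mul_le_mul_left ℓ hp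
        _ ≤ I.card := this
    omega
  -- the tail is the union of the blocks J (ℓ+1), ℓ < N
  have hset : I \ J 0 = (Finset.range N).biUnion (fun ℓ => J (ℓ + 1)) := by
    ext i
    simp only [Finset.mem_sdiff, Finset.mem_biUnion, Finset.mem_range]
    constructor
    · rintro ⟨hiI, hi0⟩
      obtain ⟨ℓ, hiℓ⟩ := hcover i hiI
      cases ℓ with
      | zero => exact absurd hiℓ hi0
      | succ m =>
          refine ⟨m, ?_, hiℓ⟩
          by_contra hm
          have : J (m + 1) = ∅ := hemp (m + 1) (by omega)
          simp [this] at hiℓ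
    · rintro ⟨ℓ, _, hiℓ⟩
      refine ⟨hsub (ℓ + 1) hiℓ, fun hi0 => ?_⟩
      have := (hdisj (ℓ + 1) 0 (by omega)).forall_ne_finset hiℓ hi0
      exact this rfl
  -- per-block bound
  have hblock : ∀ ℓ : ℕ, ∑ i ∈ J (ℓ + 1), a i ^ 2 * b i ^ 2
      ≤ (∑ j ∈ J ℓ, a j ^ 2) * S / p := by
    intro ℓ
    rcases Finset.eq_empty_or_nonempty (J (ℓ + 1)) with h | h
    · rw [h, Finset.sum_empty]
      have : 0 ≤ (∑ j ∈ J ℓ, a j ^ 2) * S / p := by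
        apply div_nonneg _ hp'.le
        exact mul_nonneg (Finset.sum_nonneg fun j _ => sq_nonneg _) hS0
      exact this
    · have hcardℓ : (J ℓ).card = p := hfull ℓ h
      have key : ∀ i ∈ J (ℓ + 1), a i ^ 2 ≤ (∑ j ∈ J ℓ, a j ^ 2) / p := by
        intro i hi
        rw [le_div_iff₀ hp']
        calc a i ^ 2 * p = ∑ _j ∈ J ℓ, a i ^ 2 := by
              rw [Finset.sum_const, hcardℓ, nsmul_eq_mul, mul_comm]
          _ ≤ ∑ j ∈ J ℓ, a j ^ 2 := Finset.sum_le_sum fun j hj => by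
              have habs := hord ℓ i hi j hj
              calc a i ^ 2 = |a i| ^ 2 := (sq_abs _).symm
                _ ≤ |a j| ^ 2 := by
                    exact pow_le_pow_left₀ (abs_nonneg _) habs 2
                _ = a j ^ 2 := sq_abs _
      calc ∑ i ∈ J (ℓ + 1), a i ^ 2 * b i ^ 2
          ≤ ∑ i ∈ J (ℓ + 1), ((∑ j ∈ J ℓ, a j ^ 2) / p) * b i ^ 2 :=
            Finset.sum_le_sum fun i hi =>
              mul_le_mul_of_nonneg_right (key i hi) (sq_nonneg _)
        _ = ((∑ j ∈ J ℓ, a j ^ 2) / p) * ∑ i ∈ J (ℓ + 1), b i ^ 2 := by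
            rw [Finset.mul_sum]
        _ ≤ ((∑ j ∈ J ℓ, a j ^ 2) / p) * S := by
            apply mul_le_mul_of_nonneg_left (hSle ℓ)
            exact div_nonneg (Finset.sum_nonneg fun j _ => sq_nonneg _) hp'.le
        _ = (∑ j ∈ J ℓ, a j ^ 2) * S / p := by ring
  have hpd : ∀ x ∈ Finset.range N, ∀ y ∈ Finset.range N, x ≠ y →
      Disjoint (J (x + 1)) (J (y + 1)) := fun x _ y _ hxy => hdisj _ _ (by omega)
  calc ∑ i ∈ I \ J 0, a i ^ 2 * b i ^ 2
      = ∑ ℓ ∈ Finset.range N, ∑ i ∈ J (ℓ + 1), a i ^ 2 * b i ^ 2 := by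
        rw [hset, Finset.sum_biUnion hpd]
    _ ≤ ∑ ℓ ∈ Finset.range N, (∑ j ∈ J ℓ, a j ^ 2) * S / p :=
        Finset.sum_le_sum fun ℓ _ => hblock ℓ
    _ = (∑ ℓ ∈ Finset.range N, ∑ j ∈ J ℓ, a j ^ 2) * S / p := by
        rw [Finset.sum_mul, Finset.sum_div]
    _ ≤ (∑ i : Fin n, a i ^ 2) * S / p := by
        have hsum : (∑ ℓ ∈ Finset.range N, ∑ j ∈ J ℓ, a j ^ 2)
            ≤ ∑ i : Fin n, a i ^ 2 := by
          rw [← Finset.sum_biUnion (fun x _ y _ hxy => hdisj x y hxy)]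
          exact Finset.sum_le_sum_of_subset_of_nonneg (Finset.subset_univ _)
            (fun i _ _ => sq_nonneg _)
        gcongr
end
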